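/- Let n ≥ 1 and λ ≥ 2 be integers. Let h : ℤⁿ → ℝ be finitely supported with mask τ(ω) = Σ_{k∈ℤⁿ} h(k) e^{−ik·ω} satisfying τ(0) = λ^{n/2}. Suppose there exist trigonometric polynomials g_1, …, g_N on ℝⁿ such that 1 − λ^{−n} Σ_{γ∈Γ} |τ(ω/λ + γ)|² = Σ_{l=1}^{N} |g_l(ω)|² for all ω ∈ ℝⁿ. For ν ∈ Λ define τ_ν(ω) = Σ_{k∈ℤⁿ} h(λk − ν) e^{−ik·ω}. Then the family consisting of τ together with q_{1,l}(ω) = τ(ω) g_l(λω), 1 ≤ l ≤ N, and q_{2,ν}(ω) = e^{iν·ω} − τ(ω)·conj(τ_ν(λω)), ν ∈ Λ, is a tight wavelet filter bank: for all ω ∈ ℝⁿ and all γ ∈ Γ, τ(ω)·conj(τ(ω+γ)) + Σ_{l=1}^{N} q_{1,l}(ω)·conj(q_{1,l}(ω+γ)) + Σ_{ν∈Λ} q_{2,ν}(ω)·conj(q_{2,ν}(ω+γ)) equals λⁿ if γ = 0 and equals 0 if γ ≠ 0. -/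

import Mathlib

open Complex Real Function ComplexConjugate BigOperators

noncomputable section

/-- The dot product of `k ∈ ℤⁿ` with `ω ∈ ℝⁿ`. -/
def zdot {n : ℕ} (k : Fin n → ℤ) (ω : Fin n → ℝ) : ℝ := ∑ i, (k i : ℝ) * ω i

/-- `Γ = {2πν/λ : ν ∈ {0,1,…,λ-1}ⁿ}`. -/
def GammaSet (n lam : ℕ) : Set (Fin n → ℝ) :=
  Set.range (fun ν : Fin n → Fin lam => fun i => 2 * π * (ν i : ℝ) / (lam : ℝ))

/-- A trigonometric polynomial on `ℝⁿ`. -/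
def IsTrigPoly {n : ℕ} (f : (Fin n → ℝ) → ℂ) : Prop :=
  ∃ c : (Fin n → ℤ) → ℂ, (Function.support c).Finite ∧
    ∀ ω, f ω = ∑ᶠ k : Fin n → ℤ, c k * Complex.exp (-Complex.I * ((zdot k ω : ℝ) : ℂ))

/-- The mask `τ(ω) = Σ_{k∈ℤⁿ} h(k) e^{-ik·ω}` of a real filter `h`. -/
def mask (n : ℕ) (h : (Fin n → ℤ) → ℝ) (ω : Fin n → ℝ) : ℂ :=
  ∑ᶠ k : Fin n → ℤ, (h k : ℂ) * Complex.exp (-Complex.I * ((zdot k ω : ℝ) : ℂ))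

/-- The polyphase component `τ_ν(ω) = Σ_{k∈ℤⁿ} h(λk - ν) e^{-ik·ω}`. -/
def polyphase (n lam : ℕ) (h : (Fin n → ℤ) → ℝ) (ν : Fin n → ℤ) (ω : Fin n → ℝ) : ℂ :=
  ∑ᶠ k : Fin n → ℤ, (h (fun i => (lam : ℤ) * k i - ν i) : ℂ) *
    Complex.exp (-Complex.I * ((zdot k ω : ℝ) : ℂ))

lemma zdot_add {n : ℕ} (k : Fin n → ℤ) (ω γ : Fin n → ℝ) :
    zdot k (ω + γ) = zdot k ω + zdot k γ := by
  simp [zdot, mul_add, Finset.sum_add_distrib]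

lemma exp_E_per {n : ℕ} (k : Fin n → ℤ) (ω : Fin n → ℝ) (m : Fin n → ℤ) :
    Complex.exp (-Complex.I * ((zdot k (fun i => ω i + 2 * π * m i) : ℝ) : ℂ))
      = Complex.exp (-Complex.I * ((zdot k ω : ℝ) : ℂ)) := by
  have hz : zdot k (fun i => ω i + 2 * π * m i)
      = zdot k ω + 2 * π * ((∑ i, k i * m i : ℤ) : ℝ) := by
    push_cast
    simp only [zdot, mul_add, Finset.sum_add_distrib, Finset.mul_sum]
    congr 1
    exact Finset.sum_congr rfl (fun i _ => by ring)
  rw [hz, Complex.ofReal_add, mul_add, Complex.exp_add]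
  have h2 : -Complex.I * ((2 * π * ((∑ i, k i * m i : ℤ) : ℝ) : ℝ) : ℂ)
      = ((-(∑ i, k i * m i : ℤ) : ℤ) : ℂ) * (2 * π * Complex.I) := by push_cast; ring
  rw [h2, Complex.exp_int_mul_two_pi_mul_I, mul_one]


lemma geom_char (lam : ℕ) (c : ℂ) (hc : c ^ lam = 1) :
    ∑ j : Fin lam, c ^ (j : ℕ) = if c = 1 then (lam : ℂ) else 0 := by
  split_ifs with h
  · simp [h]
  · rw [Fin.sum_univ_eq_sum_range, geom_sum_eq h, hc]; simp

lemma char_sum (n lam : ℕ) (hlam : 2 ≤ lam) (d : Fin n → ℤ) (hd : ∀ i, (d i).natAbs < lam) :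
    ∑ ν : Fin n → Fin lam,
      Complex.exp (Complex.I * (((∑ i, (d i : ℝ) * (2 * π * (ν i : ℝ) / lam)) : ℝ) : ℂ))
      = if d = 0 then (lam : ℂ) ^ n else 0 := by
  have hlamN : lam ≠ 0 := by omega
  have hlam0 : (lam : ℂ) ≠ 0 := Nat.cast_ne_zero.mpr hlamN
  set w : Fin n → ℂ := fun i => Complex.exp (Complex.I * (2 * π * (d i : ℝ) / lam)) with hw
  have hwpow : ∀ (i : Fin n) (j : ℕ),
      w i ^ j = Complex.exp (Complex.I * (((d i : ℝ) * (2 * π * (j : ℝ) / lam)) : ℝ)) := by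
    intro i j
    rw [hw, ← Complex.exp_nat_mul]
    congr 1
    push_cast
    ring
  have hsplit : ∀ ν : Fin n → Fin lam,
      Complex.exp (Complex.I * (((∑ i, (d i : ℝ) * (2 * π * (ν i : ℝ) / lam)) : ℝ) : ℂ))
        = ∏ i, w i ^ ((ν i : ℕ)) := by
    intro ν
    rw [Complex.ofReal_sum, Finset.mul_sum, Complex.exp_sum]
    exact Finset.prod_congr rfl fun i _ => (hwpow i (ν i)).symm
  rw [Finset.sum_congr rfl (fun ν _ => hsplit ν),
    ← Fintype.prod_sum (fun i (j : Fin lam) => w i ^ (j : ℕ))]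
  have hwlam : ∀ i, w i ^ lam = 1 := by
    intro i
    rw [← Complex.exp_nat_mul]
    have : (lam : ℂ) * (Complex.I * (2 * π * (d i : ℝ) / lam)) = (d i : ℂ) * (2 * π * Complex.I) := by
      push_cast
      field_simp
    rw [this]
    exact_mod_cast Complex.exp_int_mul_two_pi_mul_I (d i)
  have hwone : ∀ i, w i = 1 ↔ d i = 0 := by
    intro i
    constructor
    · intro h1
      obtain ⟨m, hm⟩ := Complex.exp_eq_one_iff.mp h1
      have hne : (2 * (π : ℂ) * Complex.I) ≠ 0 := by
        simp [Real.pi_ne_zero, Complex.I_ne_zero, Complex.ofReal_ne_zero]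
      have key : (2 * (π : ℂ) * Complex.I) * (d i : ℂ)
          = (2 * (π : ℂ) * Complex.I) * ((m : ℂ) * lam) := by
        field_simp at hm
        linear_combination (2 * (π : ℂ) * Complex.I) * hm
      have hdm : (d i : ℂ) = (m : ℂ) * lam := mul_left_cancel₀ hne key
      have hdmZ : d i = m * lam := by exact_mod_cast hdm
      have : (d i).natAbs = m.natAbs * lam := by rw [hdmZ, Int.natAbs_mul, Int.natAbs_natCast]
      have hlt : (d i).natAbs < lam := hd i
      rw [this] at hlt
      have hm0 : m = 0 := by
        rw [← Int.natAbs_eq_zero]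
        by_contra hc
        exact absurd hlt (not_lt.mpr (Nat.le_mul_of_pos_left lam (Nat.pos_of_ne_zero hc)))
      rw [hdmZ, hm0, zero_mul]
    · intro h0; simp [hw, h0]
  rw [Finset.prod_congr rfl (fun i _ => geom_char lam (w i) (hwlam i))]
  by_cases hd0 : d = 0
  · have hall : ∀ i, w i = 1 := fun i => (hwone i).mpr (by simp [hd0])
    simp [hd0, hall]
  · obtain ⟨i, hi⟩ : ∃ i, d i ≠ 0 := by
      by_contra hc
      push_neg at hc
      exact hd0 (funext hc)
    rw [if_neg hd0]
    exact Finset.prod_eq_zero (Finset.mem_univ i) (by simp [hwone, hi])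

section decomp
variable {n lam : ℕ}

/-- the quotient finset -/
def Mq {h : (Fin n → ℤ) → ℝ} (hfin : (Function.support h).Finite) (lam : ℕ) : Finset (Fin n → ℤ) :=
  hfin.toFinset.image (fun k => fun i => (k i + ((-(k i)) % (lam : ℤ))) / (lam : ℤ))

lemma mask_eq_sum (h : (Fin n → ℤ) → ℝ) (hfin : (Function.support h).Finite) (ω : Fin n → ℝ) :
    mask n h ω = ∑ k ∈ hfin.toFinset, (h k : ℂ) * Complex.exp (-Complex.I * ((zdot k ω : ℝ) : ℂ)) := by
  apply finsum_eq_sum_of_support_subset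
  intro k hk
  simp only [Function.mem_support, ne_eq] at hk
  have : h k ≠ 0 := by
    intro h0
    apply hk
    rw [h0]
    simp
  simpa [Set.Finite.coe_toFinset] using this

lemma polyphase_eq_sum (h : (Fin n → ℤ) → ℝ) (hfin : (Function.support h).Finite) (hlam : 2 ≤ lam) (ν : Fin n → ℤ) (hν : ∀ i, 0 ≤ ν i ∧ ν i < lam) (ω : Fin n → ℝ) :
    polyphase n lam h ν ω = ∑ m ∈ Mq hfin lam,
      (h (fun i => (lam : ℤ) * m i - ν i) : ℂ) * Complex.exp (-Complex.I * ((zdot m ω : ℝ) : ℂ)) := by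
  have hlam0 : (0:ℤ) < (lam : ℤ) := by exact_mod_cast Nat.lt_of_lt_of_le Nat.zero_lt_two hlam
  apply finsum_eq_sum_of_support_subset
  intro m hm
  simp only [Function.mem_support, ne_eq] at hm
  have hh : h (fun i => (lam : ℤ) * m i - ν i) ≠ 0 := by
    intro h0; apply hm; rw [h0]; simp
  have hk : (fun i => (lam : ℤ) * m i - ν i) ∈ hfin.toFinset := by
    rw [Set.Finite.mem_toFinset]; exact hh
  unfold Mq
  refine Finset.mem_coe.mpr (Finset.mem_image.mpr ⟨_, hk, ?_⟩)
  funext i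
  have hνi := hν i
  have hmod : (-(((lam : ℤ) * m i - ν i))) % (lam : ℤ) = ν i := by
    have he : (-(((lam : ℤ) * m i - ν i))) = ν i + (lam : ℤ) * (-(m i)) := by ring
    rw [he, Int.add_mul_emod_self_left, Int.emod_eq_of_lt hνi.1 hνi.2]
  simp only [hmod]
  have he2 : ((lam : ℤ) * m i - ν i + ν i) = (lam : ℤ) * m i := by ring
  rw [he2, Int.mul_ediv_cancel_left _ (ne_of_gt hlam0)]

lemma zdot_comb (ν m : Fin n → ℤ) (ω : Fin n → ℝ) :
    zdot (fun i => (lam : ℤ) * m i - ν i) ω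
      = zdot m (fun i => (lam : ℝ) * ω i) - zdot ν ω := by
  unfold zdot
  rw [← Finset.sum_sub_distrib]
  refine Finset.sum_congr rfl fun i _ => ?_
  push_cast
  ring

lemma exp_comb (ν m : Fin n → ℤ) (ω : Fin n → ℝ) :
    Complex.exp (Complex.I * ((zdot ν ω : ℝ) : ℂ)) *
      Complex.exp (-Complex.I * ((zdot m (fun i => (lam : ℝ) * ω i) : ℝ) : ℂ))
      = Complex.exp (-Complex.I * ((zdot (fun i => (lam : ℤ) * m i - ν i) ω : ℝ) : ℂ)) := by
  rw [← Complex.exp_add]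
  congr 1
  rw [zdot_comb]
  push_cast
  ring

lemma mask_decomp (h : (Fin n → ℤ) → ℝ) (hfin : (Function.support h).Finite) (hlam : 2 ≤ lam) (ω : Fin n → ℝ) :
    mask n h ω = ∑ ν : Fin n → Fin lam,
      Complex.exp (Complex.I * ((zdot (fun i => ((ν i : ℤ))) ω : ℝ) : ℂ)) *
        polyphase n lam h (fun i => ((ν i : ℤ))) (fun i => (lam : ℝ) * ω i) := by
  classical
  have hlam0 : (0:ℤ) < (lam : ℤ) := by exact_mod_cast Nat.lt_of_lt_of_le Nat.zero_lt_two hlam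
  have hνbound : ∀ (ν : Fin n → Fin lam) (i : Fin n),
      0 ≤ ((ν i : ℤ)) ∧ ((ν i : ℤ)) < lam := by
    intro ν i
    constructor
    · positivity
    · exact_mod_cast (ν i).isLt
  -- rewrite RHS
  have hrhs : ∑ ν : Fin n → Fin lam,
      Complex.exp (Complex.I * ((zdot (fun i => ((ν i : ℤ))) ω : ℝ) : ℂ)) *
        polyphase n lam h (fun i => ((ν i : ℤ))) (fun i => (lam : ℝ) * ω i)
      = ∑ ν : Fin n → Fin lam, ∑ m ∈ Mq hfin lam,
          (h (fun i => (lam : ℤ) * m i - (ν i : ℤ)) : ℂ) *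
            Complex.exp (-Complex.I * ((zdot (fun i => (lam : ℤ) * m i - (ν i : ℤ)) ω : ℝ) : ℂ)) := by
    refine Finset.sum_congr rfl fun ν _ => ?_
    rw [polyphase_eq_sum h hfin hlam _ (hνbound ν), Finset.mul_sum]
    refine Finset.sum_congr rfl fun m _ => ?_
    rw [← exp_comb]
    ring
  rw [hrhs, mask_eq_sum h hfin]
  -- the reindexing map
  set φ : (Fin n → Fin lam) × (Fin n → ℤ) → (Fin n → ℤ) :=
    fun p => fun i => (lam : ℤ) * p.2 i - (p.1 i : ℤ) with hφ
  set K : Finset (Fin n → ℤ) := (Finset.univ ×ˢ Mq hfin lam).image φ with hK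
  have hinj : Set.InjOn φ ((Finset.univ : Finset (Fin n → Fin lam)) ×ˢ Mq hfin lam : Finset ((Fin n → Fin lam) × (Fin n → ℤ))) := by
    intro p _ q _ hpq
    have hcoord : ∀ i, (lam : ℤ) * p.2 i - (p.1 i : ℤ) = (lam : ℤ) * q.2 i - (q.1 i : ℤ) :=
      fun i => congrFun hpq i
    have hν : ∀ i, (p.1 i : ℤ) = (q.1 i : ℤ) := by
      intro i
      have hdvd : (lam : ℤ) ∣ ((p.1 i : ℤ) - (q.1 i : ℤ)) :=
        ⟨p.2 i - q.2 i, by have := hcoord i; ring_nf; linarith [hcoord i]⟩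
      have hb1 := (p.1 i).isLt
      have hb2 := (q.1 i).isLt
      have habs : ((p.1 i : ℤ) - (q.1 i : ℤ)).natAbs < ((lam : ℤ)).natAbs := by
        simp only [Int.natAbs_natCast]
        omega
      have := Int.eq_zero_of_dvd_of_natAbs_lt_natAbs hdvd habs
      omega
    have hm : p.2 = q.2 := by
      funext i
      have h1 := hcoord i
      rw [hν i] at h1
      have h2 : (lam : ℤ) * p.2 i = (lam : ℤ) * q.2 i := by linarith
      exact mul_left_cancel₀ (ne_of_gt hlam0) h2
    have hν' : p.1 = q.1 := by
      funext i
      have := hν i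
      exact Fin.ext (by exact_mod_cast this)
    exact Prod.ext hν' hm
  have hsub : hfin.toFinset ⊆ K := by
    intro k hk
    rw [hK, Finset.mem_image]
    refine ⟨(fun i => ⟨((-(k i)) % (lam : ℤ)).toNat, ?_⟩,
            fun i => (k i + ((-(k i)) % (lam : ℤ))) / (lam : ℤ)), ?_, ?_⟩
    · have h1 : 0 ≤ (-(k i)) % (lam : ℤ) := Int.emod_nonneg _ (ne_of_gt hlam0)
      have h2 : (-(k i)) % (lam : ℤ) < lam := Int.emod_lt_of_pos _ hlam0
      omega
    · rw [Finset.mem_product]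
      refine ⟨Finset.mem_univ _, ?_⟩
      unfold Mq
      exact Finset.mem_image_of_mem _ hk
    · funext i
      simp only [hφ]
      have h1 : 0 ≤ (-(k i)) % (lam : ℤ) := Int.emod_nonneg _ (ne_of_gt hlam0)
      have heq : k i + (-(k i)) % (lam : ℤ) = (lam : ℤ) * (-((-(k i)) / (lam : ℤ))) := by
        rw [Int.emod_def]
        ring
      rw [heq, Int.mul_ediv_cancel_left _ (ne_of_gt hlam0)]
      rw [Int.toNat_of_nonneg h1]
      omega
  rw [Finset.sum_subset hsub (by
    intro k _ hk
    have : h k = 0 := by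
      by_contra hc
      exact hk (by rw [Set.Finite.mem_toFinset]; exact hc)
    simp [this])]
  rw [hK, Finset.sum_image hinj, Finset.sum_product]
end decomp

lemma polyphase_per {n lam : ℕ} (h : (Fin n → ℤ) → ℝ) (ν : Fin n → ℤ) (ω : Fin n → ℝ)
    (m : Fin n → ℤ) :
    polyphase n lam h ν (fun i => ω i + 2 * π * m i) = polyphase n lam h ν ω := by
  unfold polyphase
  exact finsum_congr fun k => by rw [exp_E_per]

lemma trigpoly_per {n : ℕ} {f : (Fin n → ℝ) → ℂ} (hf : IsTrigPoly f) (ω : Fin n → ℝ)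
    (m : Fin n → ℤ) :
    f (fun i => ω i + 2 * π * m i) = f ω := by
  obtain ⟨c, _, hrep⟩ := hf
  rw [hrep, hrep]
  exact finsum_congr fun k => by rw [exp_E_per]

lemma conj_expI (r : ℝ) : conj (Complex.exp (Complex.I * (r : ℂ)))
    = Complex.exp (-Complex.I * (r : ℂ)) := by
  rw [← Complex.exp_conj, map_mul, Complex.conj_I, Complex.conj_ofReal, neg_mul]

lemma expI_mul_conj (r : ℝ) : Complex.exp (Complex.I * (r : ℂ)) *
    conj (Complex.exp (Complex.I * (r : ℂ))) = 1 := by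
  rw [conj_expI, ← Complex.exp_add]
  simp

/-- decomposition of `mask` at a shifted point -/
lemma mask_decomp_shift {n lam : ℕ} (h : (Fin n → ℤ) → ℝ) (hfin : (Function.support h).Finite)
    (hlam : 2 ≤ lam) (ω : Fin n → ℝ) (c : Fin n → Fin lam) :
    mask n h (ω + fun i => 2 * π * (c i : ℝ) / lam) = ∑ ν : Fin n → Fin lam,
      Complex.exp (Complex.I * ((zdot (fun i => ((ν i : ℤ)))
          (ω + fun i => 2 * π * (c i : ℝ) / lam) : ℝ) : ℂ)) *
        polyphase n lam h (fun i => ((ν i : ℤ))) (fun i => (lam : ℝ) * ω i) := by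
  have hlamR : (lam : ℝ) ≠ 0 := by positivity
  rw [mask_decomp h hfin hlam]
  refine Finset.sum_congr rfl fun ν _ => ?_
  congr 1
  have harg : (fun i => (lam : ℝ) * ((ω + fun i => 2 * π * (c i : ℝ) / lam) i))
      = fun i => ((lam : ℝ) * ω i) + 2 * π * ((fun j => ((c j : ℤ))) i : ℤ) := by
    funext i
    simp only [Pi.add_apply]
    push_cast
    field_simp
  rw [harg, polyphase_per]

lemma sumsq {n lam : ℕ} (h : (Fin n → ℤ) → ℝ) (hfin : (Function.support h).Finite)
    (hlam : 2 ≤ lam) (ω : Fin n → ℝ) :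
    ∑ c : Fin n → Fin lam,
      mask n h (ω + fun i => 2 * π * (c i : ℝ) / lam) *
        conj (mask n h (ω + fun i => 2 * π * (c i : ℝ) / lam))
      = (lam : ℂ) ^ n * ∑ ν : Fin n → Fin lam,
          polyphase n lam h (fun i => ((ν i : ℤ))) (fun i => (lam : ℝ) * ω i) *
            conj (polyphase n lam h (fun i => ((ν i : ℤ))) (fun i => (lam : ℝ) * ω i)) := by
  classical
  set P : (Fin n → Fin lam) → ℂ :=
    fun ν => polyphase n lam h (fun i => ((ν i : ℤ))) (fun i => (lam : ℝ) * ω i) with hP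
  set A : (Fin n → Fin lam) → ℂ :=
    fun ν => Complex.exp (Complex.I * ((zdot (fun i => ((ν i : ℤ))) ω : ℝ) : ℂ)) with hA
  set B : (Fin n → Fin lam) → (Fin n → Fin lam) → ℂ := fun ν c =>
    Complex.exp (Complex.I *
      ((zdot (fun i => ((ν i : ℤ))) (fun i => 2 * π * (c i : ℝ) / lam) : ℝ) : ℂ)) with hB
  -- expand each mask
  have hmask : ∀ c : Fin n → Fin lam,
      mask n h (ω + fun i => 2 * π * (c i : ℝ) / lam)
        = ∑ ν : Fin n → Fin lam, (A ν * B ν c) * P ν := by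
    intro c
    rw [mask_decomp_shift h hfin hlam ω c]
    refine Finset.sum_congr rfl fun ν _ => ?_
    rw [hA, hP, hB]
    congr 1
    rw [← Complex.exp_add]
    congr 1
    rw [zdot_add]
    push_cast
    ring
  have hBchar : ∀ ν ν' : Fin n → Fin lam,
      ∑ c : Fin n → Fin lam, B ν c * conj (B ν' c) = if ν' = ν then (lam : ℂ) ^ n else 0 := by
    intro ν ν'
    set d : Fin n → ℤ := fun i => (ν i : ℤ) - (ν' i : ℤ) with hd
    have hstep : ∀ c : Fin n → Fin lam, B ν c * conj (B ν' c)
        = Complex.exp (Complex.I * (((∑ i, (d i : ℝ) * (2 * π * (c i : ℝ) / lam)) : ℝ) : ℂ)) := by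
      intro c
      rw [hB, conj_expI, ← Complex.exp_add]
      congr 1
      have hr : (∑ i, (d i : ℝ) * (2 * π * (c i : ℝ) / lam))
          = zdot (fun i => ((ν i : ℤ))) (fun i => 2 * π * (c i : ℝ) / lam)
            - zdot (fun i => ((ν' i : ℤ))) (fun i => 2 * π * (c i : ℝ) / lam) := by
        unfold zdot
        rw [← Finset.sum_sub_distrib]
        exact Finset.sum_congr rfl fun i _ => by rw [hd]; push_cast; ring
      rw [hr]
      push_cast
      ring
    rw [Finset.sum_congr rfl (fun c _ => hstep c),
      char_sum n lam hlam d (fun i => by simp only [hd]; omega)]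
    congr 1
    simp only [hd, eq_iff_iff]
    constructor
    · intro hd0
      funext i
      have := congrFun hd0 i
      simp only [Pi.zero_apply, sub_eq_zero] at this
      exact (Fin.ext (by exact_mod_cast this.symm))
    · intro hee; rw [hee]; funext i; simp
  calc ∑ c : Fin n → Fin lam,
      mask n h (ω + fun i => 2 * π * (c i : ℝ) / lam) *
        conj (mask n h (ω + fun i => 2 * π * (c i : ℝ) / lam))
      = ∑ c : Fin n → Fin lam, ∑ ν : Fin n → Fin lam, ∑ ν' : Fin n → Fin lam,
          ((A ν * P ν) * conj (A ν' * P ν')) * (B ν c * conj (B ν' c)) := by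
        refine Finset.sum_congr rfl fun c _ => ?_
        rw [hmask c, map_sum, Finset.sum_mul_sum]
        refine Finset.sum_congr rfl fun ν _ => Finset.sum_congr rfl fun ν' _ => ?_
        rw [map_mul, map_mul, map_mul]
        ring
    _ = ∑ ν : Fin n → Fin lam, ∑ ν' : Fin n → Fin lam,
          ((A ν * P ν) * conj (A ν' * P ν')) * ∑ c : Fin n → Fin lam, (B ν c * conj (B ν' c)) := by
        rw [Finset.sum_comm]
        refine Finset.sum_congr rfl fun ν _ => ?_
        rw [Finset.sum_comm]
        refine Finset.sum_congr rfl fun ν' _ => ?_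
        rw [Finset.mul_sum]
    _ = ∑ ν : Fin n → Fin lam, ∑ ν' : Fin n → Fin lam,
          (if ν' = ν then ((A ν * P ν) * conj (A ν' * P ν')) * (lam : ℂ) ^ n else 0) := by
        refine Finset.sum_congr rfl fun ν _ => Finset.sum_congr rfl fun ν' _ => ?_
        rw [hBchar ν ν', mul_ite, mul_zero]
    _ = ∑ ν : Fin n → Fin lam, ((A ν * P ν) * conj (A ν * P ν)) * (lam : ℂ) ^ n := by
        refine Finset.sum_congr rfl fun ν _ => ?_
        rw [Finset.sum_ite_eq' Finset.univ ν
          (fun ν' => ((A ν * P ν) * conj (A ν' * P ν')) * (lam : ℂ) ^ n)]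
        simp
    _ = (lam : ℂ) ^ n * ∑ ν : Fin n → Fin lam, P ν * conj (P ν) := by
        rw [Finset.mul_sum]
        refine Finset.sum_congr rfl fun ν _ => ?_
        rw [map_mul]
        have := expI_mul_conj ((zdot (fun i => ((ν i : ℤ))) ω : ℝ))
        calc (A ν * P ν) * (conj (A ν) * conj (P ν)) * (lam : ℂ) ^ n
            = (A ν * conj (A ν)) * (P ν * conj (P ν)) * (lam : ℂ) ^ n := by ring
          _ = (lam : ℂ) ^ n * (P ν * conj (P ν)) := by rw [hA, this]; ring

lemma UEP_key (n lam N : ℕ) (hlam : 2 ≤ lam)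
    (h : (Fin n → ℤ) → ℝ) (hfin : (Function.support h).Finite)
    (g : ℕ → (Fin n → ℝ) → ℂ) (hg : ∀ l < N, IsTrigPoly (g l))
    (hsos : ∀ ω : Fin n → ℝ,
      1 - ((lam : ℝ) ^ n)⁻¹ *
          ∑ γ : Fin n → Fin lam,
            (‖mask n h
              (fun i => ω i / (lam : ℝ) + 2 * π * (γ i : ℝ) / (lam : ℝ))‖) ^ 2
        = ∑ l ∈ Finset.range N, (‖g l ω‖) ^ 2)
    (ω : Fin n → ℝ) (ν₀ : Fin n → Fin lam) :
    mask n h ω * conj (mask n h (ω + fun i => 2 * π * (ν₀ i : ℝ) / (lam : ℝ)))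
      + (∑ l ∈ Finset.range N,
          (mask n h ω * g l (fun i => (lam : ℝ) * ω i)) *
            conj (mask n h (ω + fun i => 2 * π * (ν₀ i : ℝ) / (lam : ℝ)) *
              g l (fun i => (lam : ℝ) * (ω + fun i => 2 * π * (ν₀ i : ℝ) / (lam : ℝ)) i)))
      + (∑ ν : Fin n → Fin lam,
          (Complex.exp (Complex.I * ((zdot (fun i => (ν i : ℤ)) ω : ℝ) : ℂ))
              - mask n h ω * conj (polyphase n lam h (fun i => (ν i : ℤ)) (fun i => (lam : ℝ) * ω i))) *
            conj (Complex.exp (Complex.I * ((zdot (fun i => (ν i : ℤ)) (ω + fun i => 2 * π * (ν₀ i : ℝ) / (lam : ℝ)) : ℝ) : ℂ))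
              - mask n h (ω + fun i => 2 * π * (ν₀ i : ℝ) / (lam : ℝ)) *
                conj (polyphase n lam h (fun i => (ν i : ℤ))
                  (fun i => (lam : ℝ) * (ω + fun i => 2 * π * (ν₀ i : ℝ) / (lam : ℝ)) i))))
    = if (fun i => 2 * π * (ν₀ i : ℝ) / (lam : ℝ)) = (0 : Fin n → ℝ) then ((lam : ℂ)) ^ n else 0 := by
  classical
  have hlamR : (lam : ℝ) ≠ 0 := by positivity
  have hlamC : ((lam : ℂ)) ^ n ≠ 0 := pow_ne_zero _ (Nat.cast_ne_zero.mpr (by omega))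
  set γv : Fin n → ℝ := fun i => 2 * π * (ν₀ i : ℝ) / lam with hγv
  set P : (Fin n → Fin lam) → ℂ :=
    fun ν => polyphase n lam h (fun i => ((ν i : ℤ))) (fun i => (lam : ℝ) * ω i) with hP
  set A : (Fin n → Fin lam) → ℂ :=
    fun ν => Complex.exp (Complex.I * ((zdot (fun i => ((ν i : ℤ))) ω : ℝ) : ℂ)) with hA
  set B : (Fin n → Fin lam) → ℂ :=
    fun ν => Complex.exp (Complex.I * ((zdot (fun i => ((ν i : ℤ))) γv : ℝ) : ℂ)) with hB
  set T : ℂ := mask n h ω with hT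
  set T' : ℂ := mask n h (ω + γv) with hT'
  set G : ℕ → ℂ := fun l => g l (fun i => (lam : ℝ) * ω i) with hG
  set δ : ℂ := if γv = (0 : Fin n → ℝ) then ((lam : ℂ)) ^ n else 0 with hδ
  have harg2 : (fun i => (lam : ℝ) * ((ω + γv) i))
      = fun i => ((lam : ℝ) * ω i) + 2 * π * ((fun j => ((ν₀ j : ℤ))) i : ℤ) := by
    funext i
    simp only [Pi.add_apply, hγv]
    push_cast
    field_simp
  have f1 : T = ∑ ν : Fin n → Fin lam, A ν * P ν := mask_decomp h hfin hlam ω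
  have f7 : ∀ ν : Fin n → Fin lam,
      Complex.exp (Complex.I * ((zdot (fun i => ((ν i : ℤ))) (ω + γv) : ℝ) : ℂ)) = A ν * B ν := by
    intro ν
    rw [hA, hB, ← Complex.exp_add, zdot_add]
    push_cast
    ring_nf
  have f6 : ∀ ν : Fin n → Fin lam,
      polyphase n lam h (fun i => ((ν i : ℤ))) (fun i => (lam : ℝ) * ((ω + γv) i)) = P ν := by
    intro ν
    rw [harg2, polyphase_per, hP]
  have f2 : T' = ∑ ν : Fin n → Fin lam, (A ν * B ν) * P ν := by
    rw [hT', mask_decomp h hfin hlam (ω + γv)]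
    refine Finset.sum_congr rfl fun ν _ => by rw [f7 ν, f6 ν]
  have f5 : ∀ l ∈ Finset.range N, g l (fun i => (lam : ℝ) * ((ω + γv) i)) = G l := by
    intro l hl
    rw [harg2, trigpoly_per (hg l (Finset.mem_range.mp hl)), hG]
  -- f3 : character sum
  have f3 : ∑ ν : Fin n → Fin lam, conj (B ν) = δ := by
    set d : Fin n → ℤ := fun i => -((ν₀ i : ℤ)) with hd
    have hstep : ∀ ν : Fin n → Fin lam, conj (B ν)
        = Complex.exp (Complex.I * (((∑ i, (d i : ℝ) * (2 * π * (ν i : ℝ) / lam)) : ℝ) : ℂ)) := by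
      intro ν
      rw [hB, conj_expI]
      congr 1
      have hr : (∑ i, (d i : ℝ) * (2 * π * (ν i : ℝ) / lam))
          = -(zdot (fun i => ((ν i : ℤ))) γv) := by
        unfold zdot
        rw [← Finset.sum_neg_distrib]
        refine Finset.sum_congr rfl fun i _ => ?_
        rw [hd, hγv]
        push_cast
        ring
      rw [hr, Complex.ofReal_neg]
      ring
    rw [Finset.sum_congr rfl (fun ν _ => hstep ν),
      char_sum n lam hlam d (fun i => by simp only [hd, Int.natAbs_neg, Int.natAbs_natCast]; exact (ν₀ i).isLt)]
    rw [hδ]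
    congr 1
    simp only [eq_iff_iff]
    constructor
    · intro hd0
      funext i
      have := congrFun hd0 i
      simp only [hd, Pi.zero_apply, neg_eq_zero, Int.natCast_eq_zero] at this
      simp [hγv, this]
    · intro hγ0
      funext i
      have h2 := congrFun hγ0 i
      simp only [hγv, Pi.zero_apply] at h2
      have h3 : (ν₀ i : ℝ) = 0 := by
        rcases div_eq_zero_iff.mp h2 with h4 | h4
        · rcases mul_eq_zero.mp h4 with h5 | h5
          · exact absurd h5 (by simp [Real.pi_ne_zero])
          · exact h5
        · exact absurd h4 hlamR
      simp only [hd, Pi.zero_apply, neg_eq_zero, Int.natCast_eq_zero]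
      exact_mod_cast h3
  -- f4 : sum of squares of polyphases
  have f4 : ∑ ν : Fin n → Fin lam, P ν * conj (P ν)
      = 1 - ∑ l ∈ Finset.range N, G l * conj (G l) := by
    have hsos' := hsos (fun i => (lam : ℝ) * ω i)
    have hargc : ∀ c : Fin n → Fin lam,
        (fun i => ((lam : ℝ) * ω i) / lam + 2 * π * (c i : ℝ) / lam)
          = ω + fun i => 2 * π * (c i : ℝ) / lam := by
      intro c
      funext i
      simp only [Pi.add_apply]
      field_simp
    simp only [hargc] at hsos'
    have hpow : ((lam : ℝ)) ^ n ≠ 0 := by positivity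
    have hS : (∑ c : Fin n → Fin lam,
        (‖mask n h (ω + fun i => 2 * π * (c i : ℝ) / lam)‖) ^ 2)
        = (lam : ℝ) ^ n * (1 - ∑ l ∈ Finset.range N,
            (‖g l (fun i => (lam : ℝ) * ω i)‖) ^ 2) := by
      field_simp at hsos' ⊢
      linarith
    have hC : ((lam : ℂ)) ^ n * (∑ ν : Fin n → Fin lam, P ν * conj (P ν))
        = ((lam : ℂ)) ^ n * (1 - ∑ l ∈ Finset.range N, G l * conj (G l)) := by
      rw [← sumsq h hfin hlam ω]
      have e1 : ∀ c : Fin n → Fin lam,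
          mask n h (ω + fun i => 2 * π * (c i : ℝ) / lam) *
            conj (mask n h (ω + fun i => 2 * π * (c i : ℝ) / lam))
          = (((‖mask n h (ω + fun i => 2 * π * (c i : ℝ) / lam)‖) ^ 2 : ℝ) : ℂ) := by
        intro c
        rw [Complex.mul_conj, Complex.sq_norm]
      rw [Finset.sum_congr rfl (fun c _ => e1 c), ← Complex.ofReal_sum, hS]
      have e2 : ∀ l ∈ Finset.range N, G l * conj (G l)
          = (((‖g l (fun i => (lam : ℝ) * ω i)‖) ^ 2 : ℝ) : ℂ) := by
        intro l _
        rw [hG, Complex.mul_conj, Complex.sq_norm]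
      rw [Finset.sum_congr rfl e2, ← Complex.ofReal_sum]
      push_cast
      ring
    exact mul_left_cancel₀ hlamC hC
  -- main calculation
  calc mask n h ω * conj (mask n h (ω + γv))
      + (∑ l ∈ Finset.range N,
          (mask n h ω * g l (fun i => (lam : ℝ) * ω i)) *
            conj (mask n h (ω + γv) * g l (fun i => (lam : ℝ) * (ω + γv) i)))
      + (∑ ν : Fin n → Fin lam,
          (Complex.exp (Complex.I * ((zdot (fun i => (ν i : ℤ)) ω : ℝ) : ℂ))
              - mask n h ω * conj (polyphase n lam h (fun i => (ν i : ℤ)) (fun i => (lam : ℝ) * ω i))) *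
            conj (Complex.exp (Complex.I * ((zdot (fun i => (ν i : ℤ)) (ω + γv) : ℝ) : ℂ))
              - mask n h (ω + γv) *
                conj (polyphase n lam h (fun i => (ν i : ℤ)) (fun i => (lam : ℝ) * (ω + γv) i))))
      = T * conj T'
        + (∑ l ∈ Finset.range N, (T * conj T') * (G l * conj (G l)))
        + (∑ ν : Fin n → Fin lam,
            (conj (B ν) - conj T' * (A ν * P ν)
              - T * (conj (A ν) * conj (B ν) * conj (P ν))
              + (T * conj T') * (P ν * conj (P ν)))) := by
        congr 1
        · congr 1
          refine Finset.sum_congr rfl fun l hl => ?_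
          rw [f5 l hl, map_mul]
          rw [show g l (fun i => (lam : ℝ) * ω i) = G l from rfl]
          ring
        · refine Finset.sum_congr rfl fun ν _ => ?_
          rw [f6 ν, f7 ν]
          have hAA : A ν * conj (A ν) = 1 := expI_mul_conj _
          rw [show Complex.exp (Complex.I * ((zdot (fun i => (ν i : ℤ)) ω : ℝ) : ℂ)) = A ν from rfl]
          rw [show mask n h ω = T from rfl, show mask n h (ω + γv) = T' from rfl]
          rw [show polyphase n lam h (fun i => ((ν i : ℤ))) (fun i => (lam : ℝ) * ω i) = P ν from rfl]
          rw [map_sub, map_mul, map_mul, Complex.conj_conj]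
          linear_combination (conj (B ν)) * hAA
    _ = T * conj T' + (T * conj T') * (∑ l ∈ Finset.range N, G l * conj (G l))
        + ((∑ ν : Fin n → Fin lam, conj (B ν))
            - conj T' * (∑ ν : Fin n → Fin lam, A ν * P ν)
            - T * (∑ ν : Fin n → Fin lam, conj (A ν) * conj (B ν) * conj (P ν))
            + (T * conj T') * (∑ ν : Fin n → Fin lam, P ν * conj (P ν))) := by
        rw [Finset.sum_add_distrib, Finset.sum_sub_distrib, Finset.sum_sub_distrib,
          ← Finset.mul_sum, ← Finset.mul_sum, ← Finset.mul_sum, ← Finset.mul_sum]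
    _ = δ := by
        have hconjsum : (∑ ν : Fin n → Fin lam, conj (A ν) * conj (B ν) * conj (P ν)) = conj T' := by
          rw [f2, map_sum]
          exact Finset.sum_congr rfl fun ν _ => by rw [map_mul, map_mul]
        rw [f3, ← f1, hconjsum, f4]
        ring

/-- Lai–Stöckler: from an sos representation
`1 - λ^{-n} Σ_{γ∈Γ} |τ(ω/λ+γ)|² = Σ_{l<N} |g_l(ω)|²` of a lowpass mask `τ`,
the masks `q_{1,l}(ω) = τ(ω) g_l(λω)` and `q_{2,ν}(ω) = e^{iν·ω} - τ(ω) conj(τ_ν(λω))`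
together with `τ` form a tight wavelet filter bank. -/
theorem sos_tight_wavelet_filter_bank (n lam N : ℕ) (hn : 1 ≤ n) (hlam : 2 ≤ lam)
    (h : (Fin n → ℤ) → ℝ) (hfin : (Function.support h).Finite)
    (hlow : mask n h 0 = (((lam : ℝ) ^ ((n : ℝ) / 2) : ℝ) : ℂ))
    (g : ℕ → (Fin n → ℝ) → ℂ) (hg : ∀ l < N, IsTrigPoly (g l))
    (hsos : ∀ ω : Fin n → ℝ,
      1 - ((lam : ℝ) ^ n)⁻¹ *
          ∑ γ : Fin n → Fin lam,
            (‖mask n h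
              (fun i => ω i / (lam : ℝ) + 2 * π * (γ i : ℝ) / (lam : ℝ))‖) ^ 2
        = ∑ l ∈ Finset.range N, (‖g l ω‖) ^ 2) :
    ∀ ω : Fin n → ℝ, ∀ γ ∈ GammaSet n lam,
      ((γ = 0 →
        mask n h ω * conj (mask n h (ω + γ))
          + (∑ l ∈ Finset.range N,
              (mask n h ω * g l (fun i => (lam : ℝ) * ω i)) *
                conj (mask n h (ω + γ) * g l (fun i => (lam : ℝ) * (ω + γ) i)))
          + (∑ ν : Fin n → Fin lam,
              (Complex.exp (Complex.I * ((zdot (fun i => (ν i : ℤ)) ω : ℝ) : ℂ))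
                  - mask n h ω * conj (polyphase n lam h (fun i => (ν i : ℤ)) (fun i => (lam : ℝ) * ω i))) *
                conj (Complex.exp (Complex.I * ((zdot (fun i => (ν i : ℤ)) (ω + γ) : ℝ) : ℂ))
                  - mask n h (ω + γ) * conj (polyphase n lam h (fun i => (ν i : ℤ)) (fun i => (lam : ℝ) * (ω + γ) i))))
        = ((lam : ℂ)) ^ n)
      ∧ (γ ≠ 0 →
        mask n h ω * conj (mask n h (ω + γ))
          + (∑ l ∈ Finset.range N,
              (mask n h ω * g l (fun i => (lam : ℝ) * ω i)) *
                conj (mask n h (ω + γ) * g l (fun i => (lam : ℝ) * (ω + γ) i)))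
          + (∑ ν : Fin n → Fin lam,
              (Complex.exp (Complex.I * ((zdot (fun i => (ν i : ℤ)) ω : ℝ) : ℂ))
                  - mask n h ω * conj (polyphase n lam h (fun i => (ν i : ℤ)) (fun i => (lam : ℝ) * ω i))) *
                conj (Complex.exp (Complex.I * ((zdot (fun i => (ν i : ℤ)) (ω + γ) : ℝ) : ℂ))
                  - mask n h (ω + γ) * conj (polyphase n lam h (fun i => (ν i : ℤ)) (fun i => (lam : ℝ) * (ω + γ) i))))
        = 0)) := by
  intro ω γ hγ
  obtain ⟨ν₀, hν₀⟩ := hγ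
  subst hν₀
  have key := UEP_key n lam N hlam h hfin g hg hsos ω ν₀
  constructor
  · intro h0
    rw [key, if_pos h0]
  · intro h0
    rw [key, if_neg h0]
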